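/- arXiv:cs/0506063 — 2 statements merged into one kernel-verified Lean document; each statement's English description precedes it below -/
import Mathlib

section
/- Categoricity for g-repairs: if ≺ is a total acyclic priority (every pair of conflicting tuples is prioritized), then there is exactly one g-repair, i.e., exactly one ≪-maximal repair. -/
/-- A relation is acyclic if no element is related to itself by the transitive closure. -/
def Acyclic {α : Type*} (prec : α → α → Prop) : Prop :=
  ∀ x, ¬ Relation.TransGen prec x x

/-- The global preference order on sets of tuples: `X ≪ Y`. -/
def ll {α : Type*} (prec : α → α → Prop) (X Y : Set α) : Prop :=
  ∀ x ∈ X \ Y, ∃ y ∈ Y \ X, prec x y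

/-- Closed neighborhood of `x` in the conflict graph. -/
def nbhd {α : Type*} (conflict : α → α → Prop) (x : α) : Set α :=
  {x} ∪ {y | conflict x y}

/-- The winnow operator: elements of `s` not dominated by any element of `s`. -/
def winnow {α : Type*} (prec : α → α → Prop) (s : Set α) : Set α :=
  {t ∈ s | ¬ ∃ t' ∈ s, prec t t'}

/-- A repair: a maximal subset of `r` containing no conflicting pair. -/
def IsRepair {α : Type*} (r : Set α) (conflict : α → α → Prop) (X : Set α) : Prop :=
  X ⊆ r ∧ (∀ a ∈ X, ∀ b ∈ X, ¬ conflict a b) ∧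
    ∀ y ∈ r, y ∉ X → ∃ a ∈ X, conflict y a

/-- A locally preferred repair: obtainable by iteratively choosing an undominated
tuple and removing it together with its conflict neighborhood. -/
def IsLRepair {α : Type*} (r : Set α) (conflict prec : α → α → Prop) (X : Set α) : Prop :=
  ∃ (n : ℕ) (x : Fin n → α), Function.Injective x ∧ X = Set.range x ∧
    (∀ i : Fin n, x i ∈ winnow prec (r \ {y | ∃ j, j < i ∧ y ∈ nbhd conflict (x j)})) ∧
    winnow prec (r \ {y | ∃ i, y ∈ nbhd conflict (x i)}) = ∅

/-- A globally preferred repair: a `≪`-maximal repair. -/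
def IsGRepair {α : Type*} (r : Set α) (conflict prec : α → α → Prop) (X : Set α) : Prop :=
  IsRepair r conflict X ∧ ∀ Y, IsRepair r conflict Y → ll prec X Y → Y = X


/-!
A tuple should be kept iff no kept tuple is preferred to it. Since `≺` is acyclic on the finite
set `r`, this recursion has a solution `G`, a kernel of the digraph `≺` on `r`: no tuple of `G` is
preferred to another, and every other tuple of `r` is beaten by one of `G`. Totality makes `G` a
repair, and every repair `Y` satisfies `Y ≪ G`, because a tuple of `Y \ G` is beaten by one of
`G`, which conflicts with it and so is not in `Y`. Conversely, if `G ≪ Y`, a tuple of `G \ Y` is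
beaten by one of `Y \ G`, which in turn is beaten by one of `G \ Y`; acyclicity and finiteness
rule out this descent, so `G ⊆ Y`, hence `Y = G`. Thus `G` is a g-repair, and any g-repair `X`
has `X ≪ G`, whence `X = G`.
-/

open Relation

theorem WellFounded.exists_kernel {β : Type*} {R : β → β → Prop} (h : WellFounded (flip R)) :
    ∃ K : Set β, ∀ x, x ∈ K ↔ ∀ y, R x y → y ∉ K :=
  ⟨{x | h.fix (fun x IH => ∀ y (hxy : R x y), ¬ IH y hxy) x}, fun x => (h.fix_eq _ x).to_iff⟩

theorem IsRepair.eq_of_subset {α : Type*} {r : Set α} {conflict : α → α → Prop} {X Y : Set α}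
    (hX : IsRepair r conflict X) (hY : IsRepair r conflict Y) (hXY : X ⊆ Y) : Y = X := by
  refine (Set.Subset.antisymm hXY fun y hy => ?_).symm
  by_contra hyX
  obtain ⟨a, haX, hya⟩ := hX.2.2 y (hY.1 hy) hyX
  exact hY.2.1 y hy a (hXY haX) hya

section

variable {α : Type*} {r : Set α} {prec : α → α → Prop}

theorem Acyclic.wellFoundedOn (hr : r.Finite) (h : Acyclic prec) :
    r.WellFoundedOn (flip (TransGen prec)) :=
  haveI : IsStrictOrder α (flip (TransGen prec)) :=
    { irrefl := h, trans := fun _ _ _ hab hbc => hbc.trans hab }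
  hr.wellFoundedOn

structure IsKernel (r : Set α) (prec : α → α → Prop) (G : Set α) : Prop where
  subset : G ⊆ r
  independent : ∀ a ∈ G, ∀ b ∈ G, ¬ prec a b
  absorbing : ∀ x ∈ r, x ∉ G → ∃ z ∈ G, prec x z

theorem Acyclic.exists_isKernel (hr : r.Finite) (h : Acyclic prec) : ∃ G, IsKernel r prec G := by
  have hwf : WellFounded (flip fun x y => prec x y ∧ y ∈ r ∧ x ∈ r) :=
    Subrelation.wf (fun hab => ⟨.single hab.1, hab.2⟩)
      (Set.wellFoundedOn_iff.mp (h.wellFoundedOn hr))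
  obtain ⟨K, hK⟩ := hwf.exists_kernel
  refine ⟨r ∩ K, ⟨Set.inter_subset_left, ?_, ?_⟩⟩
  · rintro a ⟨har, haK⟩ b ⟨hbr, hbK⟩ hab
    exact (hK a).mp haK b ⟨hab, hbr, har⟩ hbK
  · intro x hxr hxG
    have hxK : x ∉ K := fun hxK => hxG ⟨hxr, hxK⟩
    rw [hK] at hxK
    push Not at hxK
    obtain ⟨z, ⟨hxz, hzr, -⟩, hzK⟩ := hxK
    exact ⟨z, ⟨hzr, hzK⟩, hxz⟩

namespace IsKernel

variable {conflict : α → α → Prop} {G Y : Set α}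

theorem isRepair (hG : IsKernel r prec G) (hsub : ∀ x y, prec x y → conflict x y)
    (htotal : ∀ x y, conflict x y → prec x y ∨ prec y x) : IsRepair r conflict G := by
  refine ⟨hG.subset, fun a ha b hb hab => ?_, fun y hy hyG => ?_⟩
  · rcases htotal a b hab with h | h
    exacts [hG.independent a ha b hb h, hG.independent b hb a ha h]
  · obtain ⟨z, hzG, hyz⟩ := hG.absorbing y hy hyG
    exact ⟨z, hzG, hsub y z hyz⟩

theorem ll_of_isRepair (hG : IsKernel r prec G) (hsub : ∀ x y, prec x y → conflict x y)
    (hY : IsRepair r conflict Y) : ll prec Y G := by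
  rintro x ⟨hxY, hxG⟩
  obtain ⟨z, hzG, hxz⟩ := hG.absorbing x (hY.1 hxY) hxG
  exact ⟨z, ⟨hzG, fun hzY => hY.2.1 x hxY z hzY (hsub x z hxz)⟩, hxz⟩

theorem subset_of_ll (hG : IsKernel r prec G) (hr : r.Finite) (hacyc : Acyclic prec)
    (hsub : ∀ x y, prec x y → conflict x y) (hY : IsRepair r conflict Y) (hll : ll prec G Y) :
    G ⊆ Y := by
  intro w hwG
  refine (hacyc.wellFoundedOn hr).induction (hG.subset hwG) (P := fun x => x ∈ G → x ∈ Y)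
    (fun x _ IH hxG => ?_) hwG
  by_contra hxY
  obtain ⟨y, ⟨hyY, hyG⟩, hxy⟩ := hll x ⟨hxG, hxY⟩
  obtain ⟨z, hzG, hyz⟩ := hG.absorbing y (hY.1 hyY) hyG
  exact hY.2.1 y hyY z (IH z (hG.subset hzG) (.tail (.single hxy) hyz) hzG) (hsub y z hyz)

theorem isGRepair (hG : IsKernel r prec G) (hr : r.Finite) (hacyc : Acyclic prec)
    (hsub : ∀ x y, prec x y → conflict x y)
    (htotal : ∀ x y, conflict x y → prec x y ∨ prec y x) : IsGRepair r conflict prec G :=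
  ⟨hG.isRepair hsub htotal, fun _ hY hll =>
    (hG.isRepair hsub htotal).eq_of_subset hY (hG.subset_of_ll hr hacyc hsub hY hll)⟩

end IsKernel

end

theorem grepair_unique_of_total_general {α : Type*} (r : Set α) (hr : r.Finite)
    (conflict prec : α → α → Prop)
    (hsub : ∀ x y, prec x y → conflict x y)
    (hacyc : Acyclic prec)
    (htotal : ∀ x y, conflict x y → prec x y ∨ prec y x) :
    ∃! X : Set α, IsGRepair r conflict prec X := by
  obtain ⟨G, hG⟩ := hacyc.exists_isKernel hr
  refine ⟨G, hG.isGRepair hr hacyc hsub htotal, fun X hX => ?_⟩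
  exact (hX.2 G (hG.isRepair hsub htotal) (hG.ll_of_isRepair hsub hX.1)).symm

/-- categoricity for g-repairs. A total acyclic priority yields a
unique g-repair. -/
theorem grepair_unique_of_total {α : Type*} (r : Set α) (hr : r.Finite)
    (conflict prec : α → α → Prop)
    (hsymm : ∀ x y, conflict x y → conflict y x)
    (hirr : ∀ x, ¬ conflict x x)
    (hsub : ∀ x y, prec x y → conflict x y)
    (hasymm : ∀ x y, prec x y → ¬ prec y x)
    (hacyc : Acyclic prec)
    (htotal : ∀ x y, conflict x y → prec x y ∨ prec y x) :
    ∃! X : Set α, IsGRepair r conflict prec X :=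
  grepair_unique_of_total_general r hr conflict prec hsub hacyc htotal
end

section
/- Non-emptiness of l-repairs: for every finite set r with conflict relation and every acyclic priority ≺, the set of l-repairs is nonempty, i.e., the iterative construction always terminates with a valid output. -/
/-!
Run the procedure by well-founded recursion on the size of the remaining set: as long as it is
nonempty, acyclicity makes its winnow nonempty (a finite strict order has maximal elements), and
removing the chosen tuple's closed neighbourhood strictly shrinks it. Injectivity of the resulting
sequence is automatic, since each chosen tuple lies outside the neighbourhoods, in particular
outside the singletons, of the earlier ones.
-/

section LRepair

variable {α : Type*} {conflict prec : α → α → Prop}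

theorem winnow_empty : winnow prec ∅ = ∅ :=
  Set.sep_empty _

theorem Acyclic.winnow_nonempty (hacyc : Acyclic prec) {s : Set α} (hs : s.Finite)
    (hne : s.Nonempty) : (winnow prec s).Nonempty := by
  let dominates : α → α → Prop := fun a b => Relation.TransGen prec b a
  have : IsStrictOrder α dominates := { irrefl := hacyc, trans := fun _ _ _ hab hbc => hbc.trans hab }
  obtain ⟨m, hms, hm⟩ := (Set.wellFoundedOn_iff.mp (hs.wellFoundedOn (r := dominates))).has_min s hne
  exact ⟨m, hms, fun ⟨t, hts, hmt⟩ => hm t hts ⟨.single hmt, hts, hms⟩⟩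

variable (conflict) in
def removedBefore {n : ℕ} (x : Fin n → α) (i : Fin n) : Set α :=
  {y | ∃ j, j < i ∧ y ∈ nbhd conflict (x j)}

variable (conflict) in
def removedAll {n : ℕ} (x : Fin n → α) : Set α :=
  {y | ∃ i, y ∈ nbhd conflict (x i)}

theorem mem_nbhd_self (x : α) : x ∈ nbhd conflict x :=
  Or.inl rfl

theorem removedBefore_cons_zero {n : ℕ} (t : α) (x : Fin n → α) :
    removedBefore conflict (Fin.cons t x : Fin (n + 1) → α) 0 = ∅ := by
  simp [removedBefore]

theorem removedBefore_cons_succ {n : ℕ} (t : α) (x : Fin n → α) (i : Fin n) :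
    removedBefore conflict (Fin.cons t x : Fin (n + 1) → α) i.succ =
      nbhd conflict t ∪ removedBefore conflict x i := by
  ext y
  simp [removedBefore, Fin.exists_fin_succ, Fin.succ_pos]

theorem removedAll_cons {n : ℕ} (t : α) (x : Fin n → α) :
    removedAll conflict (Fin.cons t x : Fin (n + 1) → α) =
      nbhd conflict t ∪ removedAll conflict x := by
  ext y
  simp [removedAll, Fin.exists_fin_succ]

variable (conflict prec) in
/-- `x` is a run of the l-repair procedure on `s`, not necessarily run to completion. -/
def IsLRun (s : Set α) {n : ℕ} (x : Fin n → α) : Prop :=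
  ∀ i, x i ∈ winnow prec (s \ removedBefore conflict x i)

theorem IsLRun.injective {s : Set α} {n : ℕ} {x : Fin n → α}
    (hx : IsLRun conflict prec s x) : Function.Injective x := by
  have key : ∀ i j, i < j → x j ≠ x i := fun i j hij hji =>
    (hx j).1.2 ⟨i, hij, by rw [hji]; exact mem_nbhd_self _⟩
  intro i j hij
  by_contra hne
  rcases lt_or_gt_of_ne hne with h | h
  exacts [key i j h hij.symm, key j i h hij]

theorem IsLRun.cons {s : Set α} {t : α} (ht : t ∈ winnow prec s) {n : ℕ} {x : Fin n → α}
    (hx : IsLRun conflict prec (s \ nbhd conflict t) x) :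
    IsLRun conflict prec s (Fin.cons t x : Fin (n + 1) → α) := by
  intro i
  induction i using Fin.cases with
  | zero => simpa [removedBefore_cons_zero] using ht
  | succ i => simpa [removedBefore_cons_succ, Set.sdiff_sdiff] using hx i

theorem Acyclic.exists_isLRun_subset_removedAll (hacyc : Acyclic prec) (s : Set α)
    (hs : s.Finite) :
    ∃ (n : ℕ) (x : Fin n → α), IsLRun conflict prec s x ∧ s ⊆ removedAll conflict x := by
  rcases s.eq_empty_or_nonempty with rfl | hne
  · exact ⟨0, Fin.elim0, fun i => i.elim0, Set.empty_subset _⟩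
  obtain ⟨t, ht⟩ := hacyc.winnow_nonempty hs hne
  have hlt : (s \ nbhd conflict t).ncard < s.ncard :=
    Set.ncard_lt_ncard (Set.sdiff_ssubset_left_iff.mpr ⟨t, ht.1, mem_nbhd_self t⟩) hs
  obtain ⟨n, x, hx, hcover⟩ :=
    hacyc.exists_isLRun_subset_removedAll _ (hs.sdiff (t := nbhd conflict t))
  refine ⟨n + 1, Fin.cons t x, hx.cons ht, ?_⟩
  rw [removedAll_cons, ← Set.sdiff_subset_iff]
  exact hcover
termination_by s.ncard

end LRepair

theorem lrepair_exists_general {α : Type*} (r : Set α) (hr : r.Finite)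
    (conflict prec : α → α → Prop)
    (hacyc : Acyclic prec) :
    ∃ X : Set α, IsLRepair r conflict prec X := by
  obtain ⟨n, x, hx, hcover⟩ := hacyc.exists_isLRun_subset_removedAll (conflict := conflict) r hr
  refine ⟨Set.range x, n, x, hx.injective, rfl, hx, ?_⟩
  change winnow prec (r \ removedAll conflict x) = ∅
  rw [Set.sdiff_eq_empty.mpr hcover, winnow_empty]

/-- non-emptiness of l-repairs. For every finite database and
acyclic priority there exists an l-repair. -/
theorem lrepair_exists {α : Type*} (r : Set α) (hr : r.Finite)
    (conflict prec : α → α → Prop)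
    (hsymm : ∀ x y, conflict x y → conflict y x)
    (hirr : ∀ x, ¬ conflict x x)
    (hsub : ∀ x y, prec x y → conflict x y)
    (hasymm : ∀ x y, prec x y → ¬ prec y x)
    (hacyc : Acyclic prec) :
    ∃ X : Set α, IsLRepair r conflict prec X :=
  lrepair_exists_general r hr conflict prec hacyc
end
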